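/- Let F₁, F₂, F₃ be real-valued dyadic step functions on [0,1)² and let the functions of tiles B₁,…,B₅ and of multitiles A be as defined below, with B_− := B₁ − B₂ − (1/2)B₃ − (1/2)B₄ − (1/2)B₅ and B_+ := B₁ + B₂ + (1/2)B₃ + (1/2)B₄ + (1/2)B₅. Then for every multitile P = I×J×Ω: (□B_−)(P) ≤ A(P) ≤ (□B_+)(P). -/

import Mathlib

open MeasureTheory

/-- The `j`-th binary digit of a nonnegative real number `x`. -/
noncomputable def bdigit (x : ℝ) (j : ℤ) : ℕ := (Int.toNat ⌊x / 2 ^ j⌋) % 2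

/-- Binary digitwise addition (XOR) of nonnegative reals. -/
noncomputable def dxor (x y : ℝ) : ℝ :=
  ∑' j : ℤ, (((bdigit x j + bdigit y j) % 2 : ℕ) : ℝ) * 2 ^ j

/-- The dyadic interval `[2^{-k} l, 2^{-k} (l+1))`. -/
def dyadicI (k : ℤ) (l : ℕ) : Set ℝ :=
  Set.Ico ((2 : ℝ) ^ (-k) * l) ((2 : ℝ) ^ (-k) * (l + 1))

/-- The L^∞-normalized Walsh wave packet `w_{I,n}` for `I = [2^{-k} l, 2^{-k}(l+1))`. -/
noncomputable def walsh (k : ℤ) (l n : ℕ) (x : ℝ) : ℝ :=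
  Set.indicator (dyadicI k l)
    (fun x => (-1 : ℝ) ^ (∑ j ∈ Finset.range (n + 1),
      (Nat.testBit n j).toNat * bdigit x (-(j : ℤ) - k - 1))) x

/-- The Walsh–Fourier average `[f]_{I,n} = |I|^{-1} ∫_I f w_{I,n}`. -/
noncomputable def avg (k : ℤ) (l n : ℕ) (f : ℝ → ℝ) : ℝ :=
  (2 : ℝ) ^ k * ∫ x in dyadicI k l, f x * walsh k l n x

/-- A real-valued dyadic step function supported on `[0,1)²`. -/
def IsDyadicStep (F : ℝ → ℝ → ℝ) : Prop :=
  ∃ (s : Finset ((ℤ × ℕ) × (ℤ × ℕ))) (c : (ℤ × ℕ) × (ℤ × ℕ) → ℝ),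
    (∀ p ∈ s, dyadicI p.1.1 p.1.2 ⊆ Set.Ico (0 : ℝ) 1 ∧
      dyadicI p.2.1 p.2.2 ⊆ Set.Ico (0 : ℝ) 1) ∧
    ∀ x y : ℝ, F x y = ∑ p ∈ s, c p * Set.indicator (dyadicI p.1.1 p.1.2) 1 x *
      Set.indicator (dyadicI p.2.1 p.2.2) 1 y

/-- `F` is constant on dyadic squares with sides of length `2^{-M}`. -/
def ConstOnSquares (M : ℕ) (F : ℝ → ℝ → ℝ) : Prop :=
  ∀ l₁ l₂ : ℕ, ∀ x ∈ dyadicI (M : ℤ) l₁, ∀ x' ∈ dyadicI (M : ℤ) l₁,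
    ∀ y ∈ dyadicI (M : ℤ) l₂, ∀ y' ∈ dyadicI (M : ℤ) l₂, F x y = F x' y'

/-- `B₁` at the tile `(k, l₁, l₂, n)`: tile `I×J×Ω` with `I = [2^{-k}l₁,·)`, `J = [2^{-k}l₂,·)`,
`Ω = [2^k n, 2^k(n+1))`. -/
noncomputable def B1 (F₁ F₂ F₃ : ℝ → ℝ → ℝ) (k : ℤ) (l₁ l₂ n : ℕ) : ℝ :=
  avg k l₂ n (fun y => avg k l₁ 0 (fun x => F₁ x y)) *
    avg k l₂ n (fun y => avg k l₁ n (fun x => F₂ x y) * avg k l₁ n (fun x => F₃ x y))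

noncomputable def B2 (F₁ : ℝ → ℝ → ℝ) (k : ℤ) (l₁ l₂ n : ℕ) : ℝ :=
  (avg k l₂ n (fun y => avg k l₁ 0 (fun x => F₁ x y))) ^ 2

noncomputable def B3 (F₂ F₃ : ℝ → ℝ → ℝ) (k : ℤ) (l₁ l₂ n : ℕ) : ℝ :=
  (avg k l₂ n (fun y => avg k l₁ n (fun x => F₂ x y) * avg k l₁ n (fun x => F₃ x y))) ^ 2

noncomputable def B4 (F₂ : ℝ → ℝ → ℝ) (k : ℤ) (l₁ l₂ n : ℕ) : ℝ :=
  (avg k l₂ 0 (fun y => (avg k l₁ n (fun x => F₂ x y)) ^ 2)) ^ 2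

noncomputable def B5 (F₃ : ℝ → ℝ → ℝ) (k : ℤ) (l₁ l₂ n : ℕ) : ℝ :=
  (avg k l₂ 0 (fun y => (avg k l₁ n (fun x => F₃ x y)) ^ 2)) ^ 2

noncomputable def Bminus (F₁ F₂ F₃ : ℝ → ℝ → ℝ) (k : ℤ) (l₁ l₂ n : ℕ) : ℝ :=
  B1 F₁ F₂ F₃ k l₁ l₂ n - B2 F₁ k l₁ l₂ n - (1/2) * B3 F₂ F₃ k l₁ l₂ n
    - (1/2) * B4 F₂ k l₁ l₂ n - (1/2) * B5 F₃ k l₁ l₂ n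

noncomputable def Bplus (F₁ F₂ F₃ : ℝ → ℝ → ℝ) (k : ℤ) (l₁ l₂ n : ℕ) : ℝ :=
  B1 F₁ F₂ F₃ k l₁ l₂ n + B2 F₁ k l₁ l₂ n + (1/2) * B3 F₂ F₃ k l₁ l₂ n
    + (1/2) * B4 F₂ k l₁ l₂ n + (1/2) * B5 F₃ k l₁ l₂ n

/-- The first-order difference `□B` at the multitile `(k, l₁, l₂, n)`, whose frequency
interval is `Ω = [2^{k+1} n, 2^{k+1}(n+1))`. -/
noncomputable def boxB (B : ℤ → ℕ → ℕ → ℕ → ℝ) (k : ℤ) (l₁ l₂ n : ℕ) : ℝ :=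
  (1/4) * (∑ α ∈ Finset.range 2, ∑ β ∈ Finset.range 2, B (k + 1) (2 * l₁ + α) (2 * l₂ + β) n)
    - ∑ γ ∈ Finset.range 2, B k l₁ l₂ (2 * n + γ)

/-- `A` at the multitile `(k, l₁, l₂, n)`. -/
noncomputable def Aform (F₁ F₂ F₃ : ℝ → ℝ → ℝ) (k : ℤ) (l₁ l₂ n : ℕ) : ℝ :=
  ∑ γ ∈ Finset.range 2,
    avg k l₂ (2 * n + γ) (fun y => avg k l₁ 0 (fun x => F₁ x y)) *
      avg k l₂ (2 * n + γ) (fun y =>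
        avg k l₁ (2 * n + (1 - γ)) (fun x => F₂ x y) *
        avg k l₁ (2 * n + (1 - γ)) (fun x => F₃ x y))

/-!
The Walsh recursion `w_{I,2n+γ} = (-1)^{γα} w_{I_α,n}` on the halves `I_α` of `I` writes every
average over a parent tile `P^γ` through averages over the children `P_{α,β}`, first in `x` and
then in `y`. With `a_{βα}` and `p_{βα}` the two factors of `B₁(P_{α,β})`, this gives
`A - □B₁ = -(1/8) ∑_β (a_{β0} - a_{β1}) (p_{β0} - p_{β1})` and
`□B₂ = (1/8) ∑_β (a_{β0} - a_{β1})²`, so by AM-GM it remains to pay `(1/32) ∑_β (p_{β0} - p_{β1})²`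
with `□(B₃ + B₄ + B₅)`. In `x`, the frequency halves `X_γ, Y_γ` and the spatial halves `u_α, v_α`
of the averages of `F₂, F₃` satisfy `X₀Y₀ + X₁Y₁ = (u₀v₀ + u₁v₁)/2`. As parent squares are at most
the mean of the children's, this leaves in `□B₃` the sum `(1/8) ∑_β (p_{β0} - p_{β1})²` plus cross
terms `P⁰P¹` with `P^γ = [X_γ Y_γ]_y`, and Cauchy-Schwarz bounds `|P⁰P¹|` by the products
`Q⁰Q¹ + R⁰R¹` of the energies `Q^γ = [X_γ²]_y`, `R^γ = [Y_γ²]_y` that `□B₄` and `□B₅` dominate.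
-/

open Finset Function

theorem neg_mul_le_of_sq_le_mul {x y a b c d : ℝ} (ha : 0 ≤ a) (hb : 0 ≤ b) (hc : 0 ≤ c)
    (hd : 0 ≤ d) (hx : x ^ 2 ≤ a * b) (hy : y ^ 2 ≤ c * d) : -(x * y) ≤ a * c + b * d := by
  have h : (x * y) ^ 2 ≤ (a * c + b * d) ^ 2 := by
    nlinarith [mul_le_mul hx hy (sq_nonneg y) (mul_nonneg ha hb),
      mul_nonneg (mul_nonneg ha hc) (mul_nonneg hb hd), sq_nonneg (a * c), sq_nonneg (b * d)]
  linarith [(abs_le_of_sq_le_sq' h (by positivity)).1]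

theorem mul_add_half_sq_add_sq_eq {P₀ P₁ p₀ p₁ : ℝ} (h : P₀ + P₁ = 1 / 2 * (p₀ + p₁)) :
    P₀ * P₁ + 1 / 2 * (P₀ ^ 2 + P₁ ^ 2) = 1 / 4 * (p₀ ^ 2 + p₁ ^ 2) - 1 / 8 * (p₀ - p₁) ^ 2 := by
  linear_combination (1 / 2 * (P₀ + P₁ + 1 / 2 * (p₀ + p₁))) * h

theorem mul_add_half_sq_add_sq_le {P₀ P₁ p₀ p₁ : ℝ} (h : P₀ + P₁ = 1 / 2 * (p₀ + p₁)) :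
    P₀ * P₁ + 1 / 2 * (P₀ ^ 2 + P₁ ^ 2) ≤ 1 / 4 * (p₀ ^ 2 + p₁ ^ 2) := by
  linarith [mul_add_half_sq_add_sq_eq h, sq_nonneg (p₀ - p₁)]

theorem abs_sum_mul_le {ι : Type*} (s : Finset ι) (x y : ι → ℝ) :
    |∑ i ∈ s, x i * y i| ≤ ∑ i ∈ s, x i ^ 2 + 1 / 4 * ∑ i ∈ s, y i ^ 2 := by
  rw [mul_sum, ← sum_add_distrib]
  refine (abs_sum_le_sum_abs _ _).trans (sum_le_sum fun i _ => ?_)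
  rw [abs_mul]
  nlinarith [sq_nonneg (|x i| - |y i| / 2), sq_abs (x i), sq_abs (y i)]

def BoundedMeasurable {α : Type*} [MeasurableSpace α] (f : α → ℝ) : Prop :=
  Measurable f ∧ ∃ C, ∀ x, |f x| ≤ C

namespace BoundedMeasurable

variable {α β : Type*} [MeasurableSpace α] [MeasurableSpace β] {f g : α → ℝ}

theorem const (c : ℝ) : BoundedMeasurable fun _ : α => c :=
  ⟨measurable_const, |c|, fun _ => le_rfl⟩

theorem indicator_one {s : Set α} (hs : MeasurableSet s) :
    BoundedMeasurable (s.indicator (1 : α → ℝ)) := by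
  refine ⟨measurable_one.indicator hs, 1, fun x => ?_⟩
  by_cases hx : x ∈ s <;> simp [hx]

theorem add (hf : BoundedMeasurable f) (hg : BoundedMeasurable g) : BoundedMeasurable (f + g) :=
  let ⟨hfm, C, hC⟩ := hf
  let ⟨hgm, D, hD⟩ := hg
  ⟨hfm.add hgm, C + D, fun x => (abs_add_le _ _).trans (add_le_add (hC x) (hD x))⟩

theorem mul (hf : BoundedMeasurable f) (hg : BoundedMeasurable g) : BoundedMeasurable (f * g) :=
  let ⟨hfm, C, hC⟩ := hf
  let ⟨hgm, D, hD⟩ := hg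
  ⟨hfm.mul hgm, C * D, fun x => by
    rw [Pi.mul_apply, abs_mul]
    exact mul_le_mul (hC x) (hD x) (abs_nonneg _) ((abs_nonneg _).trans (hC x))⟩

theorem smul (hf : BoundedMeasurable f) (c : ℝ) : BoundedMeasurable (c • f) :=
  (const c).mul hf

theorem abs (hf : BoundedMeasurable f) : BoundedMeasurable fun x => |f x| :=
  let ⟨hfm, C, hC⟩ := hf
  ⟨hfm.abs, C, fun x => by simpa using hC x⟩

theorem finset_sum {ι : Type*} (s : Finset ι) {f : ι → α → ℝ}
    (hf : ∀ i ∈ s, BoundedMeasurable (f i)) : BoundedMeasurable (∑ i ∈ s, f i) := by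
  classical
  induction s using Finset.induction_on with
  | empty => rw [sum_empty]; exact const 0
  | insert a s ha ih =>
    rw [sum_insert ha]
    exact (hf a (mem_insert_self a s)).add (ih fun i hi => hf i (mem_insert_of_mem hi))

theorem comp_measurable (hf : BoundedMeasurable f) {φ : β → α} (hφ : Measurable φ) :
    BoundedMeasurable (f ∘ φ) :=
  let ⟨hfm, C, hC⟩ := hf
  ⟨hfm.comp hφ, C, fun x => hC (φ x)⟩

theorem integrableOn {f : ℝ → ℝ} (hf : BoundedMeasurable f) {s : Set ℝ}
    (hs : volume s ≠ ⊤) : IntegrableOn f s :=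
  let ⟨hfm, C, hC⟩ := hf
  Measure.integrableOn_of_bounded hs hfm.aestronglyMeasurable
    (Filter.Eventually.of_forall fun x => (hC x : ‖f x‖ ≤ C))

end BoundedMeasurable

theorem IsDyadicStep.boundedMeasurable {F : ℝ → ℝ → ℝ} (hF : IsDyadicStep F) :
    BoundedMeasurable (uncurry F) := by
  obtain ⟨s, c, -, hrep⟩ := hF
  have : uncurry F = ∑ p ∈ s, c p • ((dyadicI p.1.1 p.1.2).indicator 1 ∘ Prod.fst *
      (dyadicI p.2.1 p.2.2).indicator 1 ∘ Prod.snd) := by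
    ext ⟨x, y⟩
    simp [hrep, mul_assoc]
  rw [this]
  exact BoundedMeasurable.finset_sum s fun p _ => BoundedMeasurable.smul
    (((BoundedMeasurable.indicator_one measurableSet_Ico).comp_measurable measurable_fst).mul
      ((BoundedMeasurable.indicator_one measurableSet_Ico).comp_measurable measurable_snd)) _

theorem measurable_bdigit (j : ℤ) : Measurable fun x : ℝ => bdigit x j :=
  (measurable_from_top : Measurable fun z : ℤ => z.toNat % 2).comp
    (Int.measurable_floor.comp (measurable_id.div_const _))

theorem measurable_walsh (k : ℤ) (l n : ℕ) : Measurable (walsh k l n) :=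
  (measurable_from_top.comp (Finset.measurable_sum _ fun _ _ =>
    (measurable_bdigit _).const_mul _)).indicator measurableSet_Ico

theorem walsh_zero (k : ℤ) (l : ℕ) : walsh k l 0 = (dyadicI k l).indicator 1 := by
  ext x
  simp [walsh, Set.indicator]

theorem abs_walsh_le_walsh_zero (k : ℤ) (l n : ℕ) (x : ℝ) : |walsh k l n x| ≤ walsh k l 0 x := by
  rw [walsh_zero]
  by_cases hx : x ∈ dyadicI k l <;> simp [walsh, hx]

theorem abs_walsh_le_one (k : ℤ) (l n : ℕ) (x : ℝ) : |walsh k l n x| ≤ 1 :=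
  (abs_walsh_le_walsh_zero k l n x).trans <| by
    rw [walsh_zero]; exact Set.indicator_le_self' (fun _ _ => zero_le_one) x

theorem boundedMeasurable_walsh (k : ℤ) (l n : ℕ) : BoundedMeasurable (walsh k l n) :=
  ⟨measurable_walsh k l n, 1, abs_walsh_le_one k l n⟩

theorem volume_dyadicI_ne_top (k : ℤ) (l : ℕ) : volume (dyadicI k l) ≠ ⊤ :=
  measure_Ico_lt_top.ne

theorem dyadicI_succ_union (k : ℤ) (l : ℕ) :
    dyadicI (k + 1) (2 * l) ∪ dyadicI (k + 1) (2 * l + 1) = dyadicI k l := by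
  have h : (2 : ℝ) ^ (-k) = 2 ^ (-(k + 1)) * 2 := by
    rw [← zpow_add_one₀ two_ne_zero]; ring_nf
  have hpos : (0 : ℝ) < 2 ^ (-(k + 1)) := zpow_pos two_pos _
  have e : (2 : ℝ) ^ (-(k + 1)) * (((2 * l : ℕ) : ℝ) + 1)
      = 2 ^ (-(k + 1)) * ((2 * l + 1 : ℕ) : ℝ) := by
    push_cast; ring
  unfold dyadicI
  rw [e, Set.Ico_union_Ico_eq_Ico] <;> push_cast
  · rw [h]; ring_nf
  · nlinarith
  · nlinarith

theorem disjoint_dyadicI_succ (k : ℤ) (l : ℕ) :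
    Disjoint (dyadicI (k + 1) (2 * l)) (dyadicI (k + 1) (2 * l + 1)) := by
  unfold dyadicI
  exact Set.Ico_disjoint_Ico_same.mono_right (by push_cast; rw [add_assoc])

theorem dyadicI_succ_subset {k : ℤ} {l α : ℕ} (hα : α < 2) :
    dyadicI (k + 1) (2 * l + α) ⊆ dyadicI k l := by
  rw [← dyadicI_succ_union k l]
  interval_cases α
  exacts [Set.subset_union_left, Set.subset_union_right]

theorem bdigit_of_mem_dyadicI_succ {k : ℤ} {l α : ℕ} (hα : α < 2) {x : ℝ}
    (hx : x ∈ dyadicI (k + 1) (2 * l + α)) : bdigit x (-k - 1) = α := by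
  have hpos : (0 : ℝ) < 2 ^ (-k - 1) := zpow_pos two_pos _
  have hfloor : ⌊x / 2 ^ (-k - 1)⌋ = ((2 * l + α : ℕ) : ℤ) := by
    obtain ⟨hx₁, hx₂⟩ := hx
    rw [show -(k + 1) = -k - 1 by ring] at hx₁ hx₂
    rw [Int.floor_eq_iff, le_div_iff₀ hpos, div_lt_iff₀ hpos]
    push_cast at hx₁ hx₂ ⊢
    constructor <;> linarith
  rw [bdigit, hfloor, Int.toNat_natCast]
  omega

theorem sum_range_testBit_mul_of_le {n M : ℕ} (h : n ≤ M) (c : ℕ → ℕ) :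
    ∑ j ∈ range M, (n.testBit j).toNat * c j = ∑ j ∈ range n, (n.testBit j).toNat * c j := by
  refine (sum_subset (range_subset_range.mpr h) fun j _ hj => ?_).symm
  rw [Nat.testBit_eq_false_of_lt, Bool.toNat_false, zero_mul]
  exact Nat.lt_two_pow_self.trans_le (Nat.pow_le_pow_right two_pos (by simpa using hj))

theorem walsh_two_mul_add {k : ℤ} {l n γ α : ℕ} (hγ : γ < 2) (hα : α < 2) {x : ℝ}
    (hx : x ∈ dyadicI (k + 1) (2 * l + α)) :
    walsh k l (2 * n + γ) x = (-1) ^ (γ * α) * walsh (k + 1) (2 * l + α) n x := by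
  have hbit : ∀ j, (2 * n + γ).testBit (j + 1) = n.testBit j := fun j => by
    rw [Nat.testBit_succ]; congr 1; omega
  rw [walsh, walsh, Set.indicator_of_mem (dyadicI_succ_subset hα hx), Set.indicator_of_mem hx,
    ← pow_add, sum_range_succ']
  simp only [hbit]
  rw [sum_range_testBit_mul_of_le (by omega : n ≤ 2 * n + γ),
    sum_range_testBit_mul_of_le (Nat.le_succ n)]
  have hbit₀ : ((2 * n + γ).testBit 0).toNat = γ := by
    rw [Nat.testBit_zero]; interval_cases γ <;> simp
  have hdigit : bdigit x (-((0 : ℕ) : ℤ) - k - 1) = α := by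
    simpa using bdigit_of_mem_dyadicI_succ hα hx
  rw [hbit₀, hdigit, add_comm]
  congr 2
  refine sum_congr rfl fun j _ => ?_
  congr 3
  push_cast; ring

theorem BoundedMeasurable.integrableOn_mul_walsh {f : ℝ → ℝ} (hf : BoundedMeasurable f) (k : ℤ)
    (l n : ℕ) (k' : ℤ) (l' : ℕ) : IntegrableOn (fun x => f x * walsh k l n x) (dyadicI k' l') :=
  (hf.mul (boundedMeasurable_walsh k l n)).integrableOn (volume_dyadicI_ne_top k' l')

section avg

variable {k : ℤ} {l n : ℕ} {f g : ℝ → ℝ}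

theorem avg_add (hf : BoundedMeasurable f) (hg : BoundedMeasurable g) :
    avg k l n (f + g) = avg k l n f + avg k l n g := by
  rw [avg, avg, avg, ← mul_add,
    ← integral_add (hf.integrableOn_mul_walsh k l n k l) (hg.integrableOn_mul_walsh k l n k l)]
  simp only [Pi.add_apply, add_mul]

theorem avg_smul (c : ℝ) (f : ℝ → ℝ) : avg k l n (c • f) = c * avg k l n f := by
  simp only [avg, Pi.smul_apply, smul_eq_mul, mul_assoc, integral_const_mul]
  ring

theorem avg_zero_nonneg (hf : ∀ x, 0 ≤ f x) : 0 ≤ avg k l 0 f := by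
  rw [avg, walsh_zero]
  exact mul_nonneg (zpow_pos two_pos k).le
    (setIntegral_nonneg measurableSet_Ico fun x hx => by simp [hx, hf x])

theorem abs_avg_le_avg_zero_abs (hf : BoundedMeasurable f) :
    |avg k l n f| ≤ avg k l 0 fun x => |f x| := by
  rw [avg, avg, abs_mul, abs_of_pos (zpow_pos two_pos k)]
  gcongr
  rw [← Real.norm_eq_abs]
  refine norm_integral_le_of_norm_le (hf.abs.integrableOn_mul_walsh k l 0 k l)
    (ae_of_all _ fun x => ?_)
  rw [Real.norm_eq_abs, abs_mul]
  exact mul_le_mul_of_nonneg_left (abs_walsh_le_walsh_zero k l n x) (abs_nonneg _)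

theorem avg_zero_mul_sq_le (hf : BoundedMeasurable f) (hg : BoundedMeasurable g) :
    avg k l 0 (f * g) ^ 2 ≤ avg k l 0 (f * f) * avg k l 0 (g * g) := by
  have hquad : ∀ t : ℝ, 0 ≤ avg k l 0 (f * f) * (t * t) + 2 * avg k l 0 (f * g) * t
      + avg k l 0 (g * g) := fun t => by
    have hexp : (t • f + g) * (t • f + g) = (t * t) • (f * f) + (2 * t) • (f * g) + g * g := by
      ext x; simp only [Pi.add_apply, Pi.mul_apply, Pi.smul_apply, smul_eq_mul]; ring
    have hnonneg : 0 ≤ avg k l 0 ((t • f + g) * (t • f + g)) :=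
      avg_zero_nonneg fun x => mul_self_nonneg _
    rwa [hexp, avg_add (((hf.mul hf).smul _).add ((hf.mul hg).smul _)) (hg.mul hg),
      avg_add ((hf.mul hf).smul _) ((hf.mul hg).smul _), avg_smul, avg_smul,
      mul_comm (t * t), mul_right_comm 2 t] at hnonneg
  have := discrim_le_zero hquad
  rw [discrim] at this
  linarith

theorem avg_mul_sq_le (hf : BoundedMeasurable f) (hg : BoundedMeasurable g) :
    avg k l n (f * g) ^ 2 ≤ avg k l 0 (f * f) * avg k l 0 (g * g) := by
  have habs : |f| * |g| = fun x => |(f * g) x| := by ext x; simp [abs_mul]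
  have hsq : ∀ h : ℝ → ℝ, |h| * |h| = h * h := fun h => by ext x; simp
  calc avg k l n (f * g) ^ 2 ≤ avg k l 0 (|f| * |g|) ^ 2 := by
        rw [habs, ← sq_abs]
        exact pow_le_pow_left₀ (abs_nonneg _) (abs_avg_le_avg_zero_abs (hf.mul hg)) 2
    _ ≤ avg k l 0 (f * f) * avg k l 0 (g * g) := by
        rw [← hsq f, ← hsq g]
        exact avg_zero_mul_sq_le hf.abs hg.abs

theorem avg_two_mul_add {γ : ℕ} (hγ : γ < 2) (hf : BoundedMeasurable f) :
    avg k l (2 * n + γ) f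
      = 1 / 2 * avg (k + 1) (2 * l) n f + 1 / 2 * (-1) ^ γ * avg (k + 1) (2 * l + 1) n f := by
  have hchild : ∀ α < 2, ∫ x in dyadicI (k + 1) (2 * l + α), f x * walsh k l (2 * n + γ) x
      = (-1) ^ (γ * α) * ∫ x in dyadicI (k + 1) (2 * l + α), f x * walsh (k + 1) (2 * l + α) n x :=
    fun α hα => by
      rw [← integral_const_mul]
      refine setIntegral_congr_fun measurableSet_Ico fun x hx => ?_
      simp only [walsh_two_mul_add hγ hα hx]
      ring
  have h2 : (2 : ℝ) ^ k = 1 / 2 * 2 ^ (k + 1) := by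
    rw [zpow_add_one₀ two_ne_zero]; ring
  rw [avg, ← dyadicI_succ_union, setIntegral_union (disjoint_dyadicI_succ k l) measurableSet_Ico
    (hf.integrableOn_mul_walsh _ _ _ _ _) (hf.integrableOn_mul_walsh _ _ _ _ _),
    hchild 1 one_lt_two, ← add_zero (2 * l), hchild 0 two_pos, add_zero, avg, avg, h2]
  simp only [mul_zero, pow_zero, mul_one]
  ring

theorem avg_two_mul (hf : BoundedMeasurable f) :
    avg k l (2 * n) f = 1 / 2 * avg (k + 1) (2 * l) n f + 1 / 2 * avg (k + 1) (2 * l + 1) n f := by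
  simpa using avg_two_mul_add (n := n) two_pos hf

theorem avg_two_mul_add_one (hf : BoundedMeasurable f) :
    avg k l (2 * n + 1) f
      = 1 / 2 * avg (k + 1) (2 * l) n f - 1 / 2 * avg (k + 1) (2 * l + 1) n f := by
  rw [avg_two_mul_add one_lt_two hf]
  ring

theorem avg_zero_eq (hf : BoundedMeasurable f) :
    avg k l 0 f = 1 / 2 * avg (k + 1) (2 * l) 0 f + 1 / 2 * avg (k + 1) (2 * l + 1) 0 f := by
  simpa using avg_two_mul (n := 0) hf

theorem sq_avg_two_mul_add_le {γ : ℕ} (hγ : γ < 2) (hf : BoundedMeasurable f) :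
    avg k l (2 * n + γ) f ^ 2
      ≤ 1 / 2 * (avg (k + 1) (2 * l) n f ^ 2 + avg (k + 1) (2 * l + 1) n f ^ 2) := by
  have hsign : ((-1 : ℝ) ^ γ) ^ 2 = 1 := by rw [← pow_mul, mul_comm, pow_mul]; norm_num
  rw [avg_two_mul_add hγ hf]
  generalize avg (k + 1) (2 * l) n f = a
  generalize avg (k + 1) (2 * l + 1) n f = b
  nlinarith [sq_nonneg (a - (-1) ^ γ * b)]

theorem neg_avg_mul_mul_avg_mul_le {u₀ u₁ v₀ v₁ : ℝ → ℝ} (hu₀ : BoundedMeasurable u₀)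
    (hu₁ : BoundedMeasurable u₁) (hv₀ : BoundedMeasurable v₀) (hv₁ : BoundedMeasurable v₁) :
    -(avg k l n (u₀ * v₀) * avg k l n (u₁ * v₁))
      ≤ avg k l 0 (u₀ * u₀) * avg k l 0 (u₁ * u₁) + avg k l 0 (v₀ * v₀) * avg k l 0 (v₁ * v₁) :=
  neg_mul_le_of_sq_le_mul (avg_zero_nonneg fun _ => mul_self_nonneg _)
    (avg_zero_nonneg fun _ => mul_self_nonneg _) (avg_zero_nonneg fun _ => mul_self_nonneg _)
    (avg_zero_nonneg fun _ => mul_self_nonneg _) (avg_mul_sq_le hu₀ hv₀) (avg_mul_sq_le hu₁ hv₁)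

end avg

noncomputable def xAvg (F : ℝ → ℝ → ℝ) (k : ℤ) (l n : ℕ) (y : ℝ) : ℝ :=
  avg k l n fun x => F x y

section xAvg

variable {F G : ℝ → ℝ → ℝ}

theorem BoundedMeasurable.slice (hF : BoundedMeasurable (uncurry F)) (y : ℝ) :
    BoundedMeasurable fun x => F x y :=
  hF.comp_measurable (measurable_id.prodMk measurable_const)

theorem BoundedMeasurable.xAvg (hF : BoundedMeasurable (uncurry F)) (k : ℤ) (l n : ℕ) :
    BoundedMeasurable (xAvg F k l n) := by
  obtain ⟨hFm, C, hC⟩ := hF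
  have hint : StronglyMeasurable (uncurry fun x y => F x y * walsh k l n x) :=
    (hFm.mul ((measurable_walsh k l n).comp measurable_fst)).stronglyMeasurable
  refine ⟨(hint.integral_prod_left (μ := volume.restrict (dyadicI k l))).measurable.const_mul _,
    2 ^ k * (C * volume.real (dyadicI k l)), fun y => ?_⟩
  rw [_root_.xAvg, avg, abs_mul, abs_of_pos (zpow_pos two_pos k), ← Real.norm_eq_abs]
  gcongr
  refine norm_setIntegral_le_of_norm_le_const measure_Ico_lt_top fun x _ => ?_
  rw [Real.norm_eq_abs, abs_mul]
  simpa using mul_le_mul (hC (x, y)) (abs_walsh_le_one k l n x) (abs_nonneg _)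
    ((abs_nonneg _).trans (hC (x, y)))

variable (k : ℤ) (l n : ℕ)

theorem xAvg_zero_eq (hF : BoundedMeasurable (uncurry F)) :
    xAvg F k l 0 = (1 / 2 : ℝ) • (xAvg F (k + 1) (2 * l) 0 + xAvg F (k + 1) (2 * l + 1) 0) := by
  ext y
  simp only [Pi.smul_apply, Pi.add_apply, smul_eq_mul, xAvg]
  rw [avg_zero_eq (hF.slice y)]
  ring

theorem xAvg_mul_add (hF : BoundedMeasurable (uncurry F)) (hG : BoundedMeasurable (uncurry G)) :
    xAvg F k l (2 * n) * xAvg G k l (2 * n) + xAvg F k l (2 * n + 1) * xAvg G k l (2 * n + 1)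
      = (1 / 2 : ℝ) • (xAvg F (k + 1) (2 * l) n * xAvg G (k + 1) (2 * l) n
          + xAvg F (k + 1) (2 * l + 1) n * xAvg G (k + 1) (2 * l + 1) n) := by
  ext y
  simp only [Pi.smul_apply, Pi.add_apply, Pi.mul_apply, smul_eq_mul, xAvg]
  rw [avg_two_mul (hF.slice y), avg_two_mul (hG.slice y), avg_two_mul_add_one (hF.slice y),
    avg_two_mul_add_one (hG.slice y)]
  ring

variable (k' : ℤ) (l' m : ℕ)

theorem avg_xAvg_zero (hF : BoundedMeasurable (uncurry F)) :
    avg k' l' m (xAvg F k l 0) = 1 / 2 *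
      (avg k' l' m (xAvg F (k + 1) (2 * l) 0) + avg k' l' m (xAvg F (k + 1) (2 * l + 1) 0)) := by
  rw [xAvg_zero_eq k l hF, avg_smul, avg_add (hF.xAvg _ _ _) (hF.xAvg _ _ _)]

theorem avg_xAvg_mul_add (hF : BoundedMeasurable (uncurry F)) (hG : BoundedMeasurable (uncurry G)) :
    avg k' l' m (xAvg F k l (2 * n) * xAvg G k l (2 * n))
      + avg k' l' m (xAvg F k l (2 * n + 1) * xAvg G k l (2 * n + 1))
      = 1 / 2 * (avg k' l' m (xAvg F (k + 1) (2 * l) n * xAvg G (k + 1) (2 * l) n)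
          + avg k' l' m (xAvg F (k + 1) (2 * l + 1) n * xAvg G (k + 1) (2 * l + 1) n)) := by
  rw [← avg_add ((hF.xAvg _ _ _).mul (hG.xAvg _ _ _)) ((hF.xAvg _ _ _).mul (hG.xAvg _ _ _)),
    xAvg_mul_add k l n hF hG, avg_smul,
    avg_add ((hF.xAvg _ _ _).mul (hG.xAvg _ _ _)) ((hF.xAvg _ _ _).mul (hG.xAvg _ _ _))]

end xAvg

section box

variable {F G F₁ F₂ F₃ : ℝ → ℝ → ℝ} (k : ℤ) (l₁ l₂ n : ℕ)

theorem boxB_eq (B : ℤ → ℕ → ℕ → ℕ → ℝ) :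
    boxB B k l₁ l₂ n = 1 / 4 * (B (k + 1) (2 * l₁) (2 * l₂) n + B (k + 1) (2 * l₁) (2 * l₂ + 1) n
        + B (k + 1) (2 * l₁ + 1) (2 * l₂) n + B (k + 1) (2 * l₁ + 1) (2 * l₂ + 1) n)
      - (B k l₁ l₂ (2 * n) + B k l₁ l₂ (2 * n + 1)) := by
  simp only [boxB, sum_range_succ, sum_range_zero, zero_add, add_zero]
  ring

theorem B1_eq : B1 F₁ F₂ F₃ k l₁ l₂ n
    = avg k l₂ n (xAvg F₁ k l₁ 0) * avg k l₂ n (xAvg F₂ k l₁ n * xAvg F₃ k l₁ n) := rfl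

theorem B2_eq : B2 F k l₁ l₂ n = avg k l₂ n (xAvg F k l₁ 0) ^ 2 := rfl

theorem B3_eq : B3 F G k l₁ l₂ n = avg k l₂ n (xAvg F k l₁ n * xAvg G k l₁ n) ^ 2 := rfl

theorem B4_eq : B4 F k l₁ l₂ n = avg k l₂ 0 (xAvg F k l₁ n * xAvg F k l₁ n) ^ 2 := by
  simp only [B4, sq]; rfl

theorem Aform_eq : Aform F₁ F₂ F₃ k l₁ l₂ n
    = avg k l₂ (2 * n) (xAvg F₁ k l₁ 0)
        * avg k l₂ (2 * n) (xAvg F₂ k l₁ (2 * n + 1) * xAvg F₃ k l₁ (2 * n + 1))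
      + avg k l₂ (2 * n + 1) (xAvg F₁ k l₁ 0)
        * avg k l₂ (2 * n + 1) (xAvg F₂ k l₁ (2 * n) * xAvg F₃ k l₁ (2 * n)) := by
  simp only [Aform, sum_range_succ, sum_range_zero, zero_add, add_zero, Nat.sub_zero, Nat.sub_self]
  rfl

theorem boxB_B2 (hF : BoundedMeasurable (uncurry F)) :
    boxB (B2 F) k l₁ l₂ n = 1 / 8 * ∑ β ∈ range 2,
      (avg (k + 1) (2 * l₂ + β) n (xAvg F (k + 1) (2 * l₁) 0)
        - avg (k + 1) (2 * l₂ + β) n (xAvg F (k + 1) (2 * l₁ + 1) 0)) ^ 2 := by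
  simp only [boxB_eq, B2_eq, sum_range_succ, sum_range_zero, zero_add, add_zero]
  rw [avg_two_mul (hF.xAvg _ _ _), avg_two_mul_add_one (hF.xAvg _ _ _),
    avg_xAvg_zero k l₁ (k + 1) (2 * l₂) n hF, avg_xAvg_zero k l₁ (k + 1) (2 * l₂ + 1) n hF]
  ring

theorem Aform_sub_boxB_B1 (h₁ : BoundedMeasurable (uncurry F₁))
    (h₂ : BoundedMeasurable (uncurry F₂)) (h₃ : BoundedMeasurable (uncurry F₃)) :
    Aform F₁ F₂ F₃ k l₁ l₂ n - boxB (B1 F₁ F₂ F₃) k l₁ l₂ n = -(1 / 8) * ∑ β ∈ range 2,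
      (avg (k + 1) (2 * l₂ + β) n (xAvg F₁ (k + 1) (2 * l₁) 0)
          - avg (k + 1) (2 * l₂ + β) n (xAvg F₁ (k + 1) (2 * l₁ + 1) 0))
        * (avg (k + 1) (2 * l₂ + β) n (xAvg F₂ (k + 1) (2 * l₁) n * xAvg F₃ (k + 1) (2 * l₁) n)
          - avg (k + 1) (2 * l₂ + β) n
              (xAvg F₂ (k + 1) (2 * l₁ + 1) n * xAvg F₃ (k + 1) (2 * l₁ + 1) n)) := by
  have hXY : ∀ m, BoundedMeasurable (xAvg F₂ k l₁ m * xAvg F₃ k l₁ m) :=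
    fun m => (h₂.xAvg _ _ _).mul (h₃.xAvg _ _ _)
  simp only [Aform_eq, boxB_eq, B1_eq, sum_range_succ, sum_range_zero, zero_add, add_zero]
  rw [avg_two_mul (h₁.xAvg _ _ _), avg_two_mul_add_one (h₁.xAvg _ _ _),
    avg_two_mul (hXY _), avg_two_mul (hXY _), avg_two_mul_add_one (hXY _),
    avg_two_mul_add_one (hXY _), avg_xAvg_zero k l₁ (k + 1) (2 * l₂) n h₁,
    avg_xAvg_zero k l₁ (k + 1) (2 * l₂ + 1) n h₁,
    eq_sub_of_add_eq' (avg_xAvg_mul_add k l₁ n (k + 1) (2 * l₂) n h₂ h₃),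
    eq_sub_of_add_eq' (avg_xAvg_mul_add k l₁ n (k + 1) (2 * l₂ + 1) n h₂ h₃)]
  ring

theorem sum_le_boxB_B3 (hF : BoundedMeasurable (uncurry F)) (hG : BoundedMeasurable (uncurry G)) :
    ∑ β ∈ range 2, (1 / 8 * (avg (k + 1) (2 * l₂ + β) n
          (xAvg F (k + 1) (2 * l₁) n * xAvg G (k + 1) (2 * l₁) n)
        - avg (k + 1) (2 * l₂ + β) n
          (xAvg F (k + 1) (2 * l₁ + 1) n * xAvg G (k + 1) (2 * l₁ + 1) n)) ^ 2
      + avg (k + 1) (2 * l₂ + β) n (xAvg F k l₁ (2 * n) * xAvg G k l₁ (2 * n))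
        * avg (k + 1) (2 * l₂ + β) n (xAvg F k l₁ (2 * n + 1) * xAvg G k l₁ (2 * n + 1)))
      ≤ boxB (B3 F G) k l₁ l₂ n := by
  have hXY : ∀ m, BoundedMeasurable (xAvg F k l₁ m * xAvg G k l₁ m) :=
    fun m => (hF.xAvg _ _ _).mul (hG.xAvg _ _ _)
  have hS₀ := sq_avg_two_mul_add_le (k := k) (l := l₂) (n := n) zero_lt_two (hXY (2 * n))
  have hS₁ := sq_avg_two_mul_add_le (k := k) (l := l₂) (n := n) one_lt_two (hXY (2 * n + 1))
  simp only [add_zero] at hS₀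
  simp only [boxB_eq, B3_eq, sum_range_succ, sum_range_zero, zero_add, add_zero]
  linarith [mul_add_half_sq_add_sq_eq (avg_xAvg_mul_add k l₁ n (k + 1) (2 * l₂) n hF hG),
    mul_add_half_sq_add_sq_eq (avg_xAvg_mul_add k l₁ n (k + 1) (2 * l₂ + 1) n hF hG)]

theorem sum_mul_le_boxB_B4 (hF : BoundedMeasurable (uncurry F)) :
    ∑ β ∈ range 2, avg (k + 1) (2 * l₂ + β) 0 (xAvg F k l₁ (2 * n) * xAvg F k l₁ (2 * n))
        * avg (k + 1) (2 * l₂ + β) 0 (xAvg F k l₁ (2 * n + 1) * xAvg F k l₁ (2 * n + 1))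
      ≤ boxB (B4 F) k l₁ l₂ n := by
  have hXX : ∀ m, BoundedMeasurable (xAvg F k l₁ m * xAvg F k l₁ m) :=
    fun m => (hF.xAvg _ _ _).mul (hF.xAvg _ _ _)
  have hS₀ := sq_avg_two_mul_add_le (k := k) (l := l₂) (n := 0) zero_lt_two (hXX (2 * n))
  have hS₁ := sq_avg_two_mul_add_le (k := k) (l := l₂) (n := 0) zero_lt_two (hXX (2 * n + 1))
  simp only [mul_zero, add_zero] at hS₀ hS₁
  simp only [boxB_eq, B4_eq, sum_range_succ, sum_range_zero, zero_add, add_zero]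
  linarith [mul_add_half_sq_add_sq_le (avg_xAvg_mul_add k l₁ n (k + 1) (2 * l₂) 0 hF hF),
    mul_add_half_sq_add_sq_le (avg_xAvg_mul_add k l₁ n (k + 1) (2 * l₂ + 1) 0 hF hF)]

theorem sum_sq_le_boxB_B3_add_B4_add_B5 (hF : BoundedMeasurable (uncurry F))
    (hG : BoundedMeasurable (uncurry G)) :
    1 / 8 * ∑ β ∈ range 2, (avg (k + 1) (2 * l₂ + β) n
          (xAvg F (k + 1) (2 * l₁) n * xAvg G (k + 1) (2 * l₁) n)
        - avg (k + 1) (2 * l₂ + β) n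
          (xAvg F (k + 1) (2 * l₁ + 1) n * xAvg G (k + 1) (2 * l₁ + 1) n)) ^ 2
      ≤ boxB (B3 F G) k l₁ l₂ n + boxB (B4 F) k l₁ l₂ n + boxB (B5 G) k l₁ l₂ n := by
  have h₃ := sum_le_boxB_B3 k l₁ l₂ n hF hG
  have h₄ := sum_mul_le_boxB_B4 k l₁ l₂ n hF
  have h₅ : _ ≤ boxB (B5 G) k l₁ l₂ n := sum_mul_le_boxB_B4 k l₁ l₂ n hG
  have hcs := fun l' => neg_avg_mul_mul_avg_mul_le (k := k + 1) (l := l') (n := n)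
    (hF.xAvg k l₁ (2 * n)) (hF.xAvg k l₁ (2 * n + 1)) (hG.xAvg k l₁ (2 * n))
    (hG.xAvg k l₁ (2 * n + 1))
  simp only [sum_range_succ, sum_range_zero, zero_add, add_zero] at h₃ h₄ h₅ ⊢
  linarith [hcs (2 * l₂), hcs (2 * l₂ + 1)]

theorem abs_Aform_sub_boxB_B1_le (h₁ : BoundedMeasurable (uncurry F₁))
    (h₂ : BoundedMeasurable (uncurry F₂)) (h₃ : BoundedMeasurable (uncurry F₃)) :
    |Aform F₁ F₂ F₃ k l₁ l₂ n - boxB (B1 F₁ F₂ F₃) k l₁ l₂ n|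
      ≤ boxB (B2 F₁) k l₁ l₂ n + (boxB (B3 F₂ F₃) k l₁ l₂ n + boxB (B4 F₂) k l₁ l₂ n
        + boxB (B5 F₃) k l₁ l₂ n) / 2 := by
  rw [Aform_sub_boxB_B1 k l₁ l₂ n h₁ h₂ h₃, boxB_B2 k l₁ l₂ n h₁, abs_mul, abs_neg,
    abs_of_pos (by norm_num : (0 : ℝ) < 1 / 8)]
  refine (mul_le_mul_of_nonneg_left (abs_sum_mul_le _ _ _) (by norm_num)).trans ?_
  have hS := sum_sq_le_boxB_B3_add_B4_add_B5 k l₁ l₂ n h₂ h₃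
  have hS_nonneg : (0 : ℝ) ≤ _ := le_trans (by positivity) hS
  linarith

theorem boxB_Bminus : boxB (Bminus F₁ F₂ F₃) k l₁ l₂ n = boxB (B1 F₁ F₂ F₃) k l₁ l₂ n
    - (boxB (B2 F₁) k l₁ l₂ n
      + (boxB (B3 F₂ F₃) k l₁ l₂ n + boxB (B4 F₂) k l₁ l₂ n + boxB (B5 F₃) k l₁ l₂ n) / 2) := by
  simp only [boxB_eq, Bminus]
  ring

theorem boxB_Bplus : boxB (Bplus F₁ F₂ F₃) k l₁ l₂ n = boxB (B1 F₁ F₂ F₃) k l₁ l₂ n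
    + (boxB (B2 F₁) k l₁ l₂ n
      + (boxB (B3 F₂ F₃) k l₁ l₂ n + boxB (B4 F₂) k l₁ l₂ n + boxB (B5 F₃) k l₁ l₂ n) / 2) := by
  simp only [boxB_eq, Bplus]
  ring

end box

theorem key_local_estimate (F₁ F₂ F₃ : ℝ → ℝ → ℝ)
    (h₁ : IsDyadicStep F₁) (h₂ : IsDyadicStep F₂) (h₃ : IsDyadicStep F₃)
    (k : ℤ) (l₁ l₂ n : ℕ) :
    boxB (Bminus F₁ F₂ F₃) k l₁ l₂ n ≤ Aform F₁ F₂ F₃ k l₁ l₂ n ∧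
    Aform F₁ F₂ F₃ k l₁ l₂ n ≤ boxB (Bplus F₁ F₂ F₃) k l₁ l₂ n := by
  have key := abs_Aform_sub_boxB_B1_le k l₁ l₂ n h₁.boundedMeasurable h₂.boundedMeasurable
    h₃.boundedMeasurable
  rw [boxB_Bminus, boxB_Bplus]
  constructor <;> linarith [abs_le.mp key]
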